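/- arXiv:2201.11985 — 9 statements merged into one kernel-verified Lean document; each statement's English description precedes it below -/
import Mathlib

section
/- Let d ≥ 1 be an integer, p > 1, and let q₀ be a real number with d < q₀ < d + 2p. For R > 0 define Φ_R : ℝ^d → ℝ by Φ_R(x) = (1 + ‖x/R‖²)^(−q₀/2), and let ΔΦ_R(x) = ∑_{i=1}^d ∂²Φ_R/∂x_i²(x) be its Laplacian. Then there exists a constant C > 0, independent of R, such that for all R > 0: ∫_{ℝ^d} Φ_R(x)^(−1/(p−1)) · |ΔΦ_R(x)|^(p/(p−1)) dx ≤ C · R^(d − 2p/(p−1)). -/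
open Real MeasureTheory

open scoped RealInnerProductSpace

/-!
With `u = 1 + ‖x / R‖²` and `e = -q₀/2`, the Laplacian of `u ^ e` is
`2 e R⁻² (d u^(e-1) + 2 (e-1) u^(e-2) ‖x / R‖²)`, which is `O(R⁻² u^(e-1))` because
`‖x / R‖² ≤ u`. So the integrand is `O(R^(-2p') u^(-(q₀ + 2p')/2))` with `p' = p/(p-1)`; this is
integrable since `q₀ + 2p' > d`, and the substitution `x = R y` contributes the factor `R^d`.
-/

theorem abs_add_mul_rpow_sub_two_le {n t : ℝ} (hn : 0 ≤ n) (ht : 0 ≤ t) (e : ℝ) :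
    |n * (1 + t) ^ (e - 1) + 2 * (e - 1) * (1 + t) ^ (e - 2) * t|
      ≤ (n + 2 * |e - 1|) * (1 + t) ^ (e - 1) := by
  have hu : 0 < 1 + t := by linarith
  have htu : (1 + t) ^ (e - 2) * t ≤ (1 + t) ^ (e - 1) :=
    calc (1 + t) ^ (e - 2) * t ≤ (1 + t) ^ (e - 2) * (1 + t) := by gcongr; linarith
      _ = (1 + t) ^ (e - 1) := by rw [← rpow_add_one hu.ne']; ring_nf
  calc |n * (1 + t) ^ (e - 1) + 2 * (e - 1) * (1 + t) ^ (e - 2) * t|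
      ≤ n * (1 + t) ^ (e - 1) + 2 * |e - 1| * ((1 + t) ^ (e - 2) * t) := by
        refine (abs_add_le _ _).trans (le_of_eq ?_)
        rw [abs_of_nonneg (by positivity), abs_mul, abs_mul, abs_mul, abs_two,
          abs_of_nonneg (by positivity : 0 ≤ (1 + t) ^ (e - 2)), abs_of_nonneg ht]
        ring
    _ ≤ n * (1 + t) ^ (e - 1) + 2 * |e - 1| * (1 + t) ^ (e - 1) := by gcongr
    _ = (n + 2 * |e - 1|) * (1 + t) ^ (e - 1) := by ring

theorem rpow_rpow_neg_mul_abs_rpow_le {u L A : ℝ} (e : ℝ) {a b : ℝ} (hu : 0 < u) (hb : 0 ≤ b)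
    (hL : |L| ≤ A * u ^ (e - 1)) :
    (u ^ e) ^ (-a) * |L| ^ b ≤ A ^ b * u ^ (-a * e + b * (e - 1)) := by
  have hA : 0 ≤ A :=
    nonneg_of_mul_nonneg_left ((abs_nonneg L).trans hL) (rpow_pos_of_pos hu _)
  calc (u ^ e) ^ (-a) * |L| ^ b ≤ (u ^ e) ^ (-a) * (A * u ^ (e - 1)) ^ b := by
        gcongr
    _ = A ^ b * u ^ (-a * e + b * (e - 1)) := by
        rw [mul_rpow hA (by positivity), ← rpow_mul hu.le, ← rpow_mul hu.le,
          rpow_add hu]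
        ring_nf

theorem inv_sq_rpow_mul_pow {R : ℝ} (hR : 0 < R) (b : ℝ) (n : ℕ) :
    (R⁻¹ ^ 2) ^ b * R ^ n = R ^ ((n : ℝ) - 2 * b) := by
  rw [inv_pow, inv_rpow (by positivity), ← rpow_natCast R 2, ← rpow_mul hR.le, ← rpow_neg hR.le,
    ← rpow_natCast R n, ← rpow_add hR]
  ring_nf

section OneAddNormSmulSqRpow

variable {F : Type*} [NormedAddCommGroup F] [InnerProductSpace ℝ F]

theorem hasFDerivAt_one_add_norm_smul_sq_rpow (c e : ℝ) (x : F) :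
    HasFDerivAt (fun z : F => (1 + ‖c • z‖ ^ 2) ^ e)
      ((2 * c ^ 2 * e * (1 + ‖c • x‖ ^ 2) ^ (e - 1)) • innerSL ℝ x) x := by
  have hbase : HasFDerivAt (fun z : F => 1 + ‖c • z‖ ^ 2) ((2 * c ^ 2) • innerSL ℝ x) x := by
    refine (((hasFDerivAt_id x).const_smul c).norm_sq.const_add 1).congr_fderiv ?_
    ext v
    simp only [Pi.smul_apply, id_eq, map_smul, ContinuousLinearMap.comp_smulₛₗ, ringHom_apply,
      ContinuousLinearMap.comp_id, smul_apply, coe_innerSL_apply, smul_eq_mul, nsmul_eq_mul,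
      Nat.cast_ofNat]
    ring
  refine (hbase.rpow_const (p := e) (Or.inl (by positivity))).congr_fderiv ?_
  rw [smul_smul]
  ring_nf

theorem fderiv_one_add_norm_smul_sq_rpow_apply (c e : ℝ) (y v : F) :
    fderiv ℝ (fun z : F => (1 + ‖c • z‖ ^ 2) ^ e) y v
      = 2 * c ^ 2 * e * ((1 + ‖c • y‖ ^ 2) ^ (e - 1) * ⟪y, v⟫) := by
  rw [(hasFDerivAt_one_add_norm_smul_sq_rpow c e y).fderiv]
  simp only [FunLike.coe_smul, Pi.smul_apply, innerSL_apply_apply, smul_eq_mul]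
  ring

theorem fderiv_fderiv_one_add_norm_smul_sq_rpow_apply (c e : ℝ) (x v : F) :
    fderiv ℝ (fun y : F => fderiv ℝ (fun z : F => (1 + ‖c • z‖ ^ 2) ^ e) y v) x v
      = 2 * c ^ 2 * e * ((1 + ‖c • x‖ ^ 2) ^ (e - 1) * ‖v‖ ^ 2
          + 2 * (e - 1) * (1 + ‖c • x‖ ^ 2) ^ (e - 2) * c ^ 2 * ⟪x, v⟫ ^ 2) := by
  have hpartial : (fun y : F => fderiv ℝ (fun z : F => (1 + ‖c • z‖ ^ 2) ^ e) y v) =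
      fun y => 2 * c ^ 2 * e * ((1 + ‖c • y‖ ^ 2) ^ (e - 1) * innerSL ℝ v y) := by
    ext y
    rw [fderiv_one_add_norm_smul_sq_rpow_apply, innerSL_apply_apply, real_inner_comm]
  have hderiv : HasFDerivAt
      (fun y => 2 * c ^ 2 * e * ((1 + ‖c • y‖ ^ 2) ^ (e - 1) * innerSL ℝ v y)) _ x :=
    ((hasFDerivAt_one_add_norm_smul_sq_rpow c (e - 1) x).mul
      (innerSL ℝ v).hasFDerivAt).const_mul (2 * c ^ 2 * e)
  rw [hpartial, hderiv.fderiv]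
  simp only [coe_innerSL_apply, smul_add, add_apply, smul_apply, inner_self_eq_norm_sq_to_K,
    ringHom_apply, smul_eq_mul, real_inner_comm v x]
  ring_nf

theorem sum_fderiv_fderiv_one_add_norm_smul_sq_rpow {ι : Type*} [Fintype ι]
    (b : OrthonormalBasis ι ℝ F) (c e : ℝ) (x : F) :
    ∑ i, fderiv ℝ (fun y : F => fderiv ℝ (fun z : F => (1 + ‖c • z‖ ^ 2) ^ e) y (b i)) x (b i)
      = 2 * c ^ 2 * e * (Fintype.card ι * (1 + ‖c • x‖ ^ 2) ^ (e - 1)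
          + 2 * (e - 1) * (1 + ‖c • x‖ ^ 2) ^ (e - 2) * ‖c • x‖ ^ 2) := by
  have hnorm : ‖c • x‖ ^ 2 = c ^ 2 * ∑ i, ⟪x, b i⟫ ^ 2 := by
    rw [b.sum_sq_inner_left, norm_smul, mul_pow, Real.norm_eq_abs, sq_abs]
  simp only [fderiv_fderiv_one_add_norm_smul_sq_rpow_apply, b.orthonormal.1, one_pow, mul_one,
    ← Finset.mul_sum, Finset.sum_add_distrib, Finset.sum_const, Finset.card_univ, nsmul_eq_mul,
    hnorm]
  ring

theorem abs_sum_fderiv_fderiv_one_add_norm_smul_sq_rpow_le {ι : Type*} [Fintype ι]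
    (b : OrthonormalBasis ι ℝ F) (c e : ℝ) (x : F) :
    |∑ i, fderiv ℝ (fun y : F => fderiv ℝ (fun z : F => (1 + ‖c • z‖ ^ 2) ^ e) y (b i)) x (b i)|
      ≤ 2 * |e| * (Fintype.card ι + 2 * |e - 1|) * c ^ 2 * (1 + ‖c • x‖ ^ 2) ^ (e - 1) := by
  rw [sum_fderiv_fderiv_one_add_norm_smul_sq_rpow, abs_mul, abs_mul, abs_mul, abs_two,
    abs_of_nonneg (sq_nonneg c)]
  calc 2 * c ^ 2 * |e| * |Fintype.card ι * (1 + ‖c • x‖ ^ 2) ^ (e - 1)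
          + 2 * (e - 1) * (1 + ‖c • x‖ ^ 2) ^ (e - 2) * ‖c • x‖ ^ 2|
      ≤ 2 * c ^ 2 * |e| * ((Fintype.card ι + 2 * |e - 1|) * (1 + ‖c • x‖ ^ 2) ^ (e - 1)) := by
        gcongr
        exact abs_add_mul_rpow_sub_two_le (Nat.cast_nonneg _) (sq_nonneg _) e
    _ = _ := by ring

end OneAddNormSmulSqRpow

theorem stmt8_general (d : ℕ) (p q₀ : ℝ) (hp : 1 < p)
    (hq1 : (d : ℝ) < q₀) :
    ∃ C > 0, ∀ R > (0 : ℝ),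
      ∫ x : EuclideanSpace ℝ (Fin d),
          ((1 + ‖R⁻¹ • x‖ ^ 2) ^ (-(q₀ / 2))) ^ (-(1 / (p - 1))) *
            |∑ i : Fin d,
                fderiv ℝ
                  (fun y => fderiv ℝ
                    (fun z : EuclideanSpace ℝ (Fin d) =>
                      (1 + ‖R⁻¹ • z‖ ^ 2) ^ (-(q₀ / 2))) y
                    (EuclideanSpace.single i 1)) x (EuclideanSpace.single i 1)| ^
              (p / (p - 1)) ≤
        C * R ^ ((d : ℝ) - 2 * p / (p - 1)) := by
  set e := -(q₀ / 2)
  set p' := p / (p - 1) with hp'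
  set r := q₀ + 2 * p'
  set K := 2 * |e| * (d + 2 * |e - 1|)
  set I := ∫ y : EuclideanSpace ℝ (Fin d), (1 + ‖y‖ ^ 2) ^ (-r / 2)
  have hp'0 : 0 < p' := div_pos (by linarith) (by linarith)
  have hexp : -(1 / (p - 1)) * e + p' * (e - 1) = -r / 2 := by
    simp only [e, r, hp']
    field_simp [show p - 1 ≠ 0 by linarith]
    ring
  have hint : Integrable fun y : EuclideanSpace ℝ (Fin d) => (1 + ‖y‖ ^ 2) ^ (-r / 2) :=
    integrable_rpow_neg_one_add_norm_sq (by rw [finrank_euclideanSpace_fin]; linarith)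
  refine ⟨K ^ p' * I + 1, by positivity, fun R hR => ?_⟩
  calc _ ≤ ∫ x : EuclideanSpace ℝ (Fin d),
          (K * R⁻¹ ^ 2) ^ p' * (1 + ‖R⁻¹ • x‖ ^ 2) ^ (-r / 2) := by
        refine integral_mono_of_nonneg (ae_of_all _ fun x => by positivity)
          ((hint.comp_smul (inv_ne_zero hR.ne')).const_mul _) (ae_of_all _ fun x => ?_)
        rw [← hexp]
        refine rpow_rpow_neg_mul_abs_rpow_le e (by positivity) hp'0.le ?_
        simpa only [EuclideanSpace.basisFun_apply, Fintype.card_fin] using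
          abs_sum_fderiv_fderiv_one_add_norm_smul_sq_rpow_le (EuclideanSpace.basisFun (Fin d) ℝ)
            R⁻¹ e x
    _ = (K * R⁻¹ ^ 2) ^ p' * R ^ d * I := by
        rw [integral_const_mul, Measure.integral_comp_inv_smul_of_nonneg volume
          (fun y : EuclideanSpace ℝ (Fin d) => (1 + ‖y‖ ^ 2) ^ (-r / 2)) hR.le,
          finrank_euclideanSpace_fin, smul_eq_mul]
        exact (mul_assoc _ _ _).symm
    _ = K ^ p' * I * R ^ ((d : ℝ) - 2 * p / (p - 1)) := by
        rw [mul_rpow (by positivity) (by positivity), mul_assoc (K ^ p'), inv_sq_rpow_mul_pow hR,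
          mul_div_assoc]
        ring
    _ ≤ (K ^ p' * I + 1) * R ^ ((d : ℝ) - 2 * p / (p - 1)) := by
        gcongr
        linarith

/-- Lemma 5 of the paper in the case `s = 1` (i.e. `δ = 2`): with
`Φ_R(x) = (1+‖x/R‖²)^(−q₀/2)`, `d < q₀ < d + 2p`, and `ΔΦ_R` its Laplacian
(sum of second partial derivatives), there is `C > 0` independent of `R` such that
`∫ Φ_R^(−1/(p−1)) |ΔΦ_R|^(p/(p−1)) dx ≤ C R^(d − 2p/(p−1))`. -/
theorem stmt8 (d : ℕ) (hd : 1 ≤ d) (p q₀ : ℝ) (hp : 1 < p)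
    (hq1 : (d : ℝ) < q₀) (hq2 : q₀ < (d : ℝ) + 2 * p) :
    ∃ C > 0, ∀ R > (0 : ℝ),
      ∫ x : EuclideanSpace ℝ (Fin d),
          ((1 + ‖R⁻¹ • x‖ ^ 2) ^ (-(q₀ / 2))) ^ (-(1 / (p - 1))) *
            |∑ i : Fin d,
                fderiv ℝ
                  (fun y => fderiv ℝ
                    (fun z : EuclideanSpace ℝ (Fin d) =>
                      (1 + ‖R⁻¹ • z‖ ^ 2) ^ (-(q₀ / 2))) y
                    (EuclideanSpace.single i 1)) x (EuclideanSpace.single i 1)| ^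
              (p / (p - 1)) ≤
        C * R ^ ((d : ℝ) - 2 * p / (p - 1)) :=
  stmt8_general d p q₀ hp hq1
end

section
/- Let γ, θ ∈ (0,1], μ, σ ∈ (0,2], p, q ∈ (1,∞) and let d ≥ 1 be a real number. Assume θp + γpq − pq + 1 > 0. Then d ≤ D̄ if and only if there exists d₀ > 0 such that d ≤ h_i(d₀) for every i ∈ {1,2,3,4}. -/
set_option maxHeartbeats 1600000 in
/-- Lemma 6 of the paper: for `γ, θ ∈ (0,1]`, `μ, σ ∈ (0,2]`, `p, q > 1`, `d ≥ 1` with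
`θp + γpq − pq + 1 > 0`, one has `d ≤ D̄` iff there exists `d₀ > 0` with `d ≤ h_i(d₀)`
for `i = 1,2,3,4`. -/
theorem stmt9 (γ θ μ σ p q d : ℝ)
    (hγ : γ ∈ Set.Ioc (0 : ℝ) 1) (hθ : θ ∈ Set.Ioc (0 : ℝ) 1)
    (hμ : μ ∈ Set.Ioc (0 : ℝ) 2) (hσ : σ ∈ Set.Ioc (0 : ℝ) 2)
    (hp : 1 < p) (hq : 1 < q) (hd : 1 ≤ d)
    (hpos : θ * p + γ * p * q - p * q + 1 > 0) :
    d ≤ min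
        (max ((θ * σ * p + θ * μ * p * q - σ * p * q + σ) / (θ * (p * q - 1)))
             (μ * (θ * p + γ * p * q - p * q + 1) / (γ * (p * q - 1))))
        (max ((γ * σ * p + γ * μ * p * q - μ * p * q + μ) / (γ * (p * q - 1)))
             (σ * (θ * p + γ * p * q - p * q + 1) / (θ * (p * q - 1)))) ↔
      ∃ d₀ > (0 : ℝ),
        d ≤ (p * (θ + γ * q) - p * q + 1) / (d₀ * (p * q - 1)) ∧
        d ≤ (p * (θ + d₀ * μ * q) - p * q + 1) / (d₀ * (p * q - 1)) ∧
        d ≤ (p * (σ * d₀ + γ * q) - p * q + 1) / (d₀ * (p * q - 1)) ∧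
        d ≤ p * (σ + μ * q) / (p * q - 1) - 1 / d₀ := by
  obtain ⟨hγ0, hγ1⟩ := hγ
  obtain ⟨hθ0, hθ1⟩ := hθ
  obtain ⟨hμ0, hμ2⟩ := hμ
  obtain ⟨hσ0, hσ2⟩ := hσ
  have hA : (0:ℝ) < p * q - 1 := by nlinarith
  have hA' : p * q - 1 ≠ 0 := ne_of_gt hA
  have hγ' : γ ≠ 0 := ne_of_gt hγ0
  have hθ' : θ ≠ 0 := ne_of_gt hθ0
  have hμ' : μ ≠ 0 := ne_of_gt hμ0
  have hσ' : σ ≠ 0 := ne_of_gt hσ0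
  constructor
  · intro hdD
    have hd12 := le_trans hdD (min_le_left _ _)
    have hd34 := le_trans hdD (min_le_right _ _)
    rcases le_total (γ * σ) (θ * μ) with hab | hab
    · -- γσ ≤ θμ : D3 ≤ D2 and D4 ≤ D1
      rcases le_total (σ * (θ * p + γ * p * q - p * q + 1) / (θ * (p * q - 1)))
          ((γ * σ * p + γ * μ * p * q - μ * p * q + μ) / (γ * (p * q - 1))) with hD | hD
      · -- D4 ≤ D3 : take d₀ = γ/μ, d ≤ D3 ≤ D2
        have hdD3 : d ≤ (γ * σ * p + γ * μ * p * q - μ * p * q + μ) / (γ * (p * q - 1)) :=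
          le_trans hd34 (max_le (le_refl _) hD)
        have hD3D2 : (γ * σ * p + γ * μ * p * q - μ * p * q + μ) / (γ * (p * q - 1)) ≤
            μ * (θ * p + γ * p * q - p * q + 1) / (γ * (p * q - 1)) := by
          rw [div_le_div_iff₀ (by positivity) (by positivity)]
          nlinarith [mul_nonneg (mul_nonneg (mul_nonneg (sub_nonneg.2 hab) hA.le) hγ0.le)
            (le_of_lt (lt_trans one_pos hp)), sq_nonneg (p*q-1)]
        refine ⟨γ/μ, by positivity, ?_, ?_, ?_, ?_⟩
        · have e : (p * (θ + γ * q) - p * q + 1) / (γ / μ * (p * q - 1)) =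
              μ * (θ * p + γ * p * q - p * q + 1) / (γ * (p * q - 1)) := by
            field_simp
          rw [e]; exact le_trans hdD3 hD3D2
        · have e : (p * (θ + γ / μ * μ * q) - p * q + 1) / (γ / μ * (p * q - 1)) =
              μ * (θ * p + γ * p * q - p * q + 1) / (γ * (p * q - 1)) := by
            field_simp
          rw [e]; exact le_trans hdD3 hD3D2
        · have e : (p * (σ * (γ / μ) + γ * q) - p * q + 1) / (γ / μ * (p * q - 1)) =
              (γ * σ * p + γ * μ * p * q - μ * p * q + μ) / (γ * (p * q - 1)) := by
            field_simp
          rw [e]; exact hdD3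
        · have e : p * (σ + μ * q) / (p * q - 1) - 1 / (γ / μ) =
              (γ * σ * p + γ * μ * p * q - μ * p * q + μ) / (γ * (p * q - 1)) := by
            field_simp; ring
          rw [e]; exact hdD3
      · -- D3 ≤ D4 : take d₀ = θ/σ, d ≤ D4 ≤ D1
        have hdD4 : d ≤ σ * (θ * p + γ * p * q - p * q + 1) / (θ * (p * q - 1)) :=
          le_trans hd34 (max_le hD (le_refl _))
        have hD4D1 : σ * (θ * p + γ * p * q - p * q + 1) / (θ * (p * q - 1)) ≤
            (θ * σ * p + θ * μ * p * q - σ * p * q + σ) / (θ * (p * q - 1)) := by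
          rw [div_le_div_iff₀ (by positivity) (by positivity)]
          nlinarith [mul_nonneg (mul_nonneg (mul_nonneg (mul_nonneg (sub_nonneg.2 hab) hA.le)
            hθ0.le) (le_of_lt (lt_trans one_pos hp))) (le_of_lt (lt_trans one_pos hq))]
        refine ⟨θ/σ, by positivity, ?_, ?_, ?_, ?_⟩
        · have e : (p * (θ + γ * q) - p * q + 1) / (θ / σ * (p * q - 1)) =
              σ * (θ * p + γ * p * q - p * q + 1) / (θ * (p * q - 1)) := by
            field_simp
          rw [e]; exact hdD4
        · have e : (p * (θ + θ / σ * μ * q) - p * q + 1) / (θ / σ * (p * q - 1)) =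
              (θ * σ * p + θ * μ * p * q - σ * p * q + σ) / (θ * (p * q - 1)) := by
            field_simp
          rw [e]; exact le_trans hdD4 hD4D1
        · have e : (p * (σ * (θ / σ) + γ * q) - p * q + 1) / (θ / σ * (p * q - 1)) =
              σ * (θ * p + γ * p * q - p * q + 1) / (θ * (p * q - 1)) := by
            field_simp
          rw [e]; exact hdD4
        · have e : p * (σ + μ * q) / (p * q - 1) - 1 / (θ / σ) =
              (θ * σ * p + θ * μ * p * q - σ * p * q + σ) / (θ * (p * q - 1)) := by
            field_simp; ring
          rw [e]; exact le_trans hdD4 hD4D1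
    · -- θμ ≤ γσ : D1 ≤ D4 and D2 ≤ D3
      rcases le_total (μ * (θ * p + γ * p * q - p * q + 1) / (γ * (p * q - 1)))
          ((θ * σ * p + θ * μ * p * q - σ * p * q + σ) / (θ * (p * q - 1))) with hD | hD
      · -- D2 ≤ D1 : take d₀ = θ/σ, d ≤ D1 ≤ D4
        have hdD1 : d ≤ (θ * σ * p + θ * μ * p * q - σ * p * q + σ) / (θ * (p * q - 1)) :=
          le_trans hd12 (max_le (le_refl _) hD)
        have hD1D4 : (θ * σ * p + θ * μ * p * q - σ * p * q + σ) / (θ * (p * q - 1)) ≤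
            σ * (θ * p + γ * p * q - p * q + 1) / (θ * (p * q - 1)) := by
          rw [div_le_div_iff₀ (by positivity) (by positivity)]
          nlinarith [mul_nonneg (mul_nonneg (mul_nonneg (mul_nonneg (sub_nonneg.2 hab) hA.le)
            hθ0.le) (le_of_lt (lt_trans one_pos hp))) (le_of_lt (lt_trans one_pos hq))]
        refine ⟨θ/σ, by positivity, ?_, ?_, ?_, ?_⟩
        · have e : (p * (θ + γ * q) - p * q + 1) / (θ / σ * (p * q - 1)) =
              σ * (θ * p + γ * p * q - p * q + 1) / (θ * (p * q - 1)) := by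
            field_simp
          rw [e]; exact le_trans hdD1 hD1D4
        · have e : (p * (θ + θ / σ * μ * q) - p * q + 1) / (θ / σ * (p * q - 1)) =
              (θ * σ * p + θ * μ * p * q - σ * p * q + σ) / (θ * (p * q - 1)) := by
            field_simp
          rw [e]; exact hdD1
        · have e : (p * (σ * (θ / σ) + γ * q) - p * q + 1) / (θ / σ * (p * q - 1)) =
              σ * (θ * p + γ * p * q - p * q + 1) / (θ * (p * q - 1)) := by
            field_simp
          rw [e]; exact le_trans hdD1 hD1D4
        · have e : p * (σ + μ * q) / (p * q - 1) - 1 / (θ / σ) =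
              (θ * σ * p + θ * μ * p * q - σ * p * q + σ) / (θ * (p * q - 1)) := by
            field_simp; ring
          rw [e]; exact hdD1
      · -- D1 ≤ D2 : take d₀ = γ/μ, d ≤ D2 ≤ D3
        have hdD2 : d ≤ μ * (θ * p + γ * p * q - p * q + 1) / (γ * (p * q - 1)) :=
          le_trans hd12 (max_le hD (le_refl _))
        have hD2D3 : μ * (θ * p + γ * p * q - p * q + 1) / (γ * (p * q - 1)) ≤
            (γ * σ * p + γ * μ * p * q - μ * p * q + μ) / (γ * (p * q - 1)) := by
          rw [div_le_div_iff₀ (by positivity) (by positivity)]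
          nlinarith [mul_nonneg (mul_nonneg (mul_nonneg (sub_nonneg.2 hab) hA.le) hγ0.le)
            (le_of_lt (lt_trans one_pos hp)), sq_nonneg (p*q-1)]
        refine ⟨γ/μ, by positivity, ?_, ?_, ?_, ?_⟩
        · have e : (p * (θ + γ * q) - p * q + 1) / (γ / μ * (p * q - 1)) =
              μ * (θ * p + γ * p * q - p * q + 1) / (γ * (p * q - 1)) := by
            field_simp
          rw [e]; exact hdD2
        · have e : (p * (θ + γ / μ * μ * q) - p * q + 1) / (γ / μ * (p * q - 1)) =
              μ * (θ * p + γ * p * q - p * q + 1) / (γ * (p * q - 1)) := by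
            field_simp
          rw [e]; exact hdD2
        · have e : (p * (σ * (γ / μ) + γ * q) - p * q + 1) / (γ / μ * (p * q - 1)) =
              (γ * σ * p + γ * μ * p * q - μ * p * q + μ) / (γ * (p * q - 1)) := by
            field_simp
          rw [e]; exact le_trans hdD2 hD2D3
        · have e : p * (σ + μ * q) / (p * q - 1) - 1 / (γ / μ) =
              (γ * σ * p + γ * μ * p * q - μ * p * q + μ) / (γ * (p * q - 1)) := by
            field_simp; ring
          rw [e]; exact le_trans hdD2 hD2D3
  · rintro ⟨d₀, hd₀, H1, H2, H3, H4⟩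
    have hd₀' : d₀ ≠ 0 := ne_of_gt hd₀
    have e4 : p * (σ + μ * q) / (p * q - 1) - 1 / d₀ =
        (p * (σ + μ * q) * d₀ - (p * q - 1)) / (d₀ * (p * q - 1)) := by
      rw [div_sub_div _ _ hA' hd₀', div_eq_div_iff (mul_ne_zero hA' hd₀') (mul_ne_zero hd₀' hA')]
      ring
    rw [e4] at H4
    refine le_min ?_ ?_
    · -- d ≤ max D1 D2
      rcases le_total d₀ (θ/σ) with h | h
      · -- h4(d₀) ≤ D1
        have hts : σ * d₀ ≤ θ := by
          rw [le_div_iff₀ hσ0] at h; linarith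
        refine le_trans (le_trans H4 ?_) (le_max_left _ _)
        rw [div_le_div_iff₀ (by positivity) (by positivity)]
        nlinarith [mul_nonneg (mul_nonneg (sub_nonneg.2 hts) hA.le) hA.le]
      · rcases le_total d₀ (γ/μ) with h' | h'
        · -- θ/σ ≤ d₀ ≤ γ/μ : use h2
          have hts : θ ≤ σ * d₀ := by
            rw [div_le_iff₀ hσ0] at h; linarith
          have htm : μ * d₀ ≤ γ := by
            rw [le_div_iff₀ hμ0] at h'; linarith
          rcases le_total 0 (θ * p - p * q + 1) with hM | hM
          · refine le_trans (le_trans H2 ?_) (le_max_left _ _)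
            rw [div_le_div_iff₀ (by positivity) (by positivity)]
            nlinarith [mul_nonneg (mul_nonneg hA.le hM) (sub_nonneg.2 hts)]
          · refine le_trans (le_trans H2 ?_) (le_max_right _ _)
            rw [div_le_div_iff₀ (by positivity) (by positivity)]
            nlinarith [mul_nonneg (mul_nonneg hA.le (neg_nonneg.2 hM)) (sub_nonneg.2 htm)]
        · -- γ/μ ≤ d₀ : h1(d₀) ≤ D2
          have htm : γ ≤ μ * d₀ := by
            rw [div_le_iff₀ hμ0] at h'; linarith
          refine le_trans (le_trans H1 ?_) (le_max_right _ _)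
          rw [div_le_div_iff₀ (by positivity) (by positivity)]
          nlinarith [mul_nonneg (mul_nonneg hA.le hpos.le) (sub_nonneg.2 htm)]
    · -- d ≤ max D3 D4
      rcases le_total d₀ (γ/μ) with h | h
      · -- h4(d₀) ≤ D3
        have htm : μ * d₀ ≤ γ := by
          rw [le_div_iff₀ hμ0] at h; linarith
        refine le_trans (le_trans H4 ?_) (le_max_left _ _)
        rw [div_le_div_iff₀ (by positivity) (by positivity)]
        nlinarith [mul_nonneg (mul_nonneg (sub_nonneg.2 htm) hA.le) hA.le]
      · rcases le_total d₀ (θ/σ) with h' | h'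
        · -- γ/μ ≤ d₀ ≤ θ/σ : use h3
          have htm : γ ≤ μ * d₀ := by
            rw [div_le_iff₀ hμ0] at h; linarith
          have hts : σ * d₀ ≤ θ := by
            rw [le_div_iff₀ hσ0] at h'; linarith
          rcases le_total 0 (γ * p * q - p * q + 1) with hK | hK
          · refine le_trans (le_trans H3 ?_) (le_max_left _ _)
            rw [div_le_div_iff₀ (by positivity) (by positivity)]
            nlinarith [mul_nonneg (mul_nonneg hA.le hK) (sub_nonneg.2 htm)]
          · refine le_trans (le_trans H3 ?_) (le_max_right _ _)
            rw [div_le_div_iff₀ (by positivity) (by positivity)]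
            nlinarith [mul_nonneg (mul_nonneg hA.le (neg_nonneg.2 hK)) (sub_nonneg.2 hts)]
        · -- θ/σ ≤ d₀ : h1(d₀) ≤ D4
          have hts : θ ≤ σ * d₀ := by
            rw [div_le_iff₀ hσ0] at h'; linarith
          refine le_trans (le_trans H1 ?_) (le_max_right _ _)
          rw [div_le_div_iff₀ (by positivity) (by positivity)]
          nlinarith [mul_nonneg (mul_nonneg hA.le hpos.le) (sub_nonneg.2 hts)]
end

section
/- Let γ, θ ∈ (0,1], μ, σ ∈ (0,2], p, q ∈ (1,∞) and let d ≥ 1 be a real number. Assume γq + θpq − pq + 1 > 0. Then d ≤ Ē if and only if there exists d₀ > 0 such that d ≤ H_i(d₀) for every i ∈ {1,2,3,4}. -/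
/-- Polynomial core of Lemma 7, with all denominators cleared. -/
lemma stmt10_key (γ θ μ σ p q d : ℝ) (hγ0 : 0 < γ) (hθ0 : 0 < θ)
    (hμ0 : 0 < μ) (hσ0 : 0 < σ) (hp : 1 < p) (hq : 1 < q) (hd : 1 ≤ d)
    (hpos : γ * q + θ * p * q - p * q + 1 > 0) :
    ((d * (θ * (p * q - 1)) ≤ θ * μ * q + θ * σ * p * q - σ * p * q + σ ∨
      d * (γ * (p * q - 1)) ≤ μ * (γ * q + θ * p * q - p * q + 1)) ∧
     (d * (γ * (p * q - 1)) ≤ γ * μ * q + γ * σ * p * q - μ * p * q + μ ∨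
      d * (θ * (p * q - 1)) ≤ σ * (γ * q + θ * p * q - p * q + 1))) ↔
    ∃ d₀ > (0 : ℝ),
      d * (d₀ * (p * q - 1)) ≤ q * (γ + θ * p) - p * q + 1 ∧
      d * (d₀ * (p * q - 1)) ≤ q * (γ + d₀ * σ * p) - p * q + 1 ∧
      d * (d₀ * (p * q - 1)) ≤ q * (μ * d₀ + θ * p) - p * q + 1 ∧
      d * ((p * q - 1) * d₀) ≤ q * (μ + σ * p) * d₀ - (p * q - 1) * 1 := by
  have hA : (0:ℝ) < p * q - 1 := by nlinarith
  have hd0 : (0:ℝ) < d := lt_of_lt_of_le one_pos hd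
  constructor
  · rintro ⟨h12, h34⟩
    -- case A : d₀ = γ/μ works when E₂ and E₃ hold
    have caseA : d * (γ * (p * q - 1)) ≤ μ * (γ * q + θ * p * q - p * q + 1) →
        d * (γ * (p * q - 1)) ≤ γ * μ * q + γ * σ * p * q - μ * p * q + μ →
        ∃ d₀ > (0 : ℝ),
          d * (d₀ * (p * q - 1)) ≤ q * (γ + θ * p) - p * q + 1 ∧
          d * (d₀ * (p * q - 1)) ≤ q * (γ + d₀ * σ * p) - p * q + 1 ∧
          d * (d₀ * (p * q - 1)) ≤ q * (μ * d₀ + θ * p) - p * q + 1 ∧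
          d * ((p * q - 1) * d₀) ≤ q * (μ + σ * p) * d₀ - (p * q - 1) * 1 := by
      intro h2 h3
      refine ⟨γ / μ, by positivity, ?_, ?_, ?_, ?_⟩
      · rw [show d * (γ / μ * (p * q - 1)) = d * (γ * (p * q - 1)) / μ by ring,
          div_le_iff₀ hμ0]
        linarith [h2]
      · rw [show d * (γ / μ * (p * q - 1)) = d * (γ * (p * q - 1)) / μ by ring,
          div_le_iff₀ hμ0,
          show (q * (γ + γ / μ * σ * p) - p * q + 1) * μ
              = q * (γ * μ + γ * σ * p) - p * q * μ + μ by field_simp]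
        linarith [h3]
      · rw [show d * (γ / μ * (p * q - 1)) = d * (γ * (p * q - 1)) / μ by ring,
          div_le_iff₀ hμ0,
          show (q * (μ * (γ / μ) + θ * p) - p * q + 1) * μ
              = (q * (γ + θ * p) - p * q + 1) * μ by field_simp]
        linarith [h2]
      · rw [show d * ((p * q - 1) * (γ / μ)) = d * (γ * (p * q - 1)) / μ by ring,
          div_le_iff₀ hμ0,
          show (q * (μ + σ * p) * (γ / μ) - (p * q - 1) * 1) * μ
              = q * (μ * γ + σ * p * γ) - (p * q - 1) * μ by field_simp]
        linarith [h3]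
    -- case B : d₀ = θ/σ works when E₁ and E₄ hold
    have caseB : d * (θ * (p * q - 1)) ≤ θ * μ * q + θ * σ * p * q - σ * p * q + σ →
        d * (θ * (p * q - 1)) ≤ σ * (γ * q + θ * p * q - p * q + 1) →
        ∃ d₀ > (0 : ℝ),
          d * (d₀ * (p * q - 1)) ≤ q * (γ + θ * p) - p * q + 1 ∧
          d * (d₀ * (p * q - 1)) ≤ q * (γ + d₀ * σ * p) - p * q + 1 ∧
          d * (d₀ * (p * q - 1)) ≤ q * (μ * d₀ + θ * p) - p * q + 1 ∧
          d * ((p * q - 1) * d₀) ≤ q * (μ + σ * p) * d₀ - (p * q - 1) * 1 := by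
      intro h1 h4
      refine ⟨θ / σ, by positivity, ?_, ?_, ?_, ?_⟩
      · rw [show d * (θ / σ * (p * q - 1)) = d * (θ * (p * q - 1)) / σ by ring,
          div_le_iff₀ hσ0]
        linarith [h4]
      · rw [show d * (θ / σ * (p * q - 1)) = d * (θ * (p * q - 1)) / σ by ring,
          div_le_iff₀ hσ0,
          show (q * (γ + θ / σ * σ * p) - p * q + 1) * σ
              = (q * (γ + θ * p) - p * q + 1) * σ by field_simp]
        linarith [h4]
      · rw [show d * (θ / σ * (p * q - 1)) = d * (θ * (p * q - 1)) / σ by ring,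
          div_le_iff₀ hσ0,
          show (q * (μ * (θ / σ) + θ * p) - p * q + 1) * σ
              = q * (μ * θ + θ * p * σ) - p * q * σ + σ by field_simp]
        linarith [h1]
      · rw [show d * ((p * q - 1) * (θ / σ)) = d * (θ * (p * q - 1)) / σ by ring,
          div_le_iff₀ hσ0,
          show (q * (μ + σ * p) * (θ / σ) - (p * q - 1) * 1) * σ
              = q * (μ * θ + σ * p * θ) - (p * q - 1) * σ by field_simp]
        linarith [h1]
    rcases h12 with h1 | h2 <;> rcases h34 with h3 | h4
    · -- E₁ and E₃ : decide using E₂ / E₄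
      rcases le_or_gt (d * (γ * (p * q - 1))) (μ * (γ * q + θ * p * q - p * q + 1)) with h2 | h2
      · exact caseA h2 h3
      rcases le_or_gt (d * (θ * (p * q - 1))) (σ * (γ * q + θ * p * q - p * q + 1)) with h4 | h4
      · exact caseB h1 h4
      -- contradiction: E₁num > σC₁ gives q(θμ - σγ) > 0, E₃num > μC₁ gives pq(γσ - μθ) > 0
      exfalso
      have hp0 : (0:ℝ) < p := by linarith
      have hx : σ * γ * q < θ * μ * q := by linarith
      have hy : μ * θ * p * q < γ * σ * p * q := by linarith
      linarith [mul_lt_mul_of_pos_left hx hp0, hy]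
    · exact caseB h1 h4
    · exact caseA h2 h3
    · rcases le_or_gt (d * (γ * (p * q - 1))) (γ * μ * q + γ * σ * p * q - μ * p * q + μ) with h3 | h3
      · exact caseA h2 h3
      rcases le_or_gt (d * (θ * (p * q - 1))) (θ * μ * q + θ * σ * p * q - σ * p * q + σ) with h1 | h1
      · exact caseB h1 h4
      exfalso
      have hp0 : (0:ℝ) < p := by linarith
      have hx : θ * μ * q < σ * γ * q := by linarith
      have hy : γ * σ * p * q < μ * θ * p * q := by linarith
      linarith [mul_lt_mul_of_pos_left hx hp0, hy]
  · rintro ⟨d₀, hd₀, P1, P2, P3, P4⟩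
    have hdA : d * (p * q - 1) ≤ q * (μ + σ * p) := by
      by_contra h
      push_neg at h
      have h2 : 0 < (d * (p * q - 1) - q * (μ + σ * p)) * d₀ :=
        mul_pos (by linarith) hd₀
      nlinarith [P4, hA]
    constructor
    · rcases le_or_gt γ (μ * d₀) with hc | hc
      · right
        linarith [mul_le_mul_of_nonneg_left P1 hμ0.le,
          mul_nonneg (mul_nonneg hd0.le hA.le) (sub_nonneg.2 hc)]
      rcases le_or_gt (σ * d₀) θ with hc2 | hc2
      · left
        linarith [mul_le_mul_of_nonneg_left P4 hσ0.le,
          mul_nonneg (sub_nonneg.2 hc2) (sub_nonneg.2 hdA)]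
      rcases le_or_gt 0 (θ * p * q - p * q + 1) with hC2 | hC2
      · left
        have hkey : d * (θ * (p * q - 1)) * d₀
            ≤ (θ * μ * q + θ * σ * p * q - σ * p * q + σ) * d₀ := by
          linarith [mul_le_mul_of_nonneg_left P3 hθ0.le,
            mul_nonneg hC2 (sub_nonneg.2 hc2.le)]
        exact le_of_mul_le_mul_right hkey hd₀
      · right
        have hkey : d * (γ * (p * q - 1)) * d₀
            ≤ μ * (γ * q + θ * p * q - p * q + 1) * d₀ := by
          linarith [mul_le_mul_of_nonneg_left P3 hγ0.le,
            mul_nonneg (sub_nonneg.2 hc.le) (neg_nonneg.2 hC2.le)]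
        exact le_of_mul_le_mul_right hkey hd₀
    · rcases le_or_gt θ (σ * d₀) with hc | hc
      · right
        linarith [mul_le_mul_of_nonneg_left P1 hσ0.le,
          mul_nonneg (mul_nonneg hd0.le hA.le) (sub_nonneg.2 hc)]
      rcases le_or_gt (μ * d₀) γ with hc2 | hc2
      · left
        linarith [mul_le_mul_of_nonneg_left P4 hμ0.le,
          mul_nonneg (sub_nonneg.2 hc2) (sub_nonneg.2 hdA)]
      rcases le_or_gt 0 (γ * q - p * q + 1) with hC3 | hC3
      · left
        have hkey : d * (γ * (p * q - 1)) * d₀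
            ≤ (γ * μ * q + γ * σ * p * q - μ * p * q + μ) * d₀ := by
          linarith [mul_le_mul_of_nonneg_left P2 hγ0.le,
            mul_nonneg hC3 (sub_nonneg.2 hc2.le)]
        exact le_of_mul_le_mul_right hkey hd₀
      · right
        have hkey : d * (θ * (p * q - 1)) * d₀
            ≤ σ * (γ * q + θ * p * q - p * q + 1) * d₀ := by
          linarith [mul_le_mul_of_nonneg_left P2 hθ0.le,
            mul_nonneg (sub_nonneg.2 hc.le) (neg_nonneg.2 hC3.le)]
        exact le_of_mul_le_mul_right hkey hd₀

/-- Lemma 7 of the paper: for `γ, θ ∈ (0,1]`, `μ, σ ∈ (0,2]`, `p, q > 1`, `d ≥ 1` with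
`γq + θpq − pq + 1 > 0`, one has `d ≤ Ē` iff there exists `d₀ > 0` with `d ≤ H_i(d₀)`
for `i = 1,2,3,4`. -/
theorem stmt10 (γ θ μ σ p q d : ℝ)
    (hγ : γ ∈ Set.Ioc (0 : ℝ) 1) (hθ : θ ∈ Set.Ioc (0 : ℝ) 1)
    (hμ : μ ∈ Set.Ioc (0 : ℝ) 2) (hσ : σ ∈ Set.Ioc (0 : ℝ) 2)
    (hp : 1 < p) (hq : 1 < q) (hd : 1 ≤ d)
    (hpos : γ * q + θ * p * q - p * q + 1 > 0) :
    d ≤ min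
        (max ((θ * μ * q + θ * σ * p * q - σ * p * q + σ) / (θ * (p * q - 1)))
             (μ * (γ * q + θ * p * q - p * q + 1) / (γ * (p * q - 1))))
        (max ((γ * μ * q + γ * σ * p * q - μ * p * q + μ) / (γ * (p * q - 1)))
             (σ * (γ * q + θ * p * q - p * q + 1) / (θ * (p * q - 1)))) ↔
      ∃ d₀ > (0 : ℝ),
        d ≤ (q * (γ + θ * p) - p * q + 1) / (d₀ * (p * q - 1)) ∧
        d ≤ (q * (γ + d₀ * σ * p) - p * q + 1) / (d₀ * (p * q - 1)) ∧
        d ≤ (q * (μ * d₀ + θ * p) - p * q + 1) / (d₀ * (p * q - 1)) ∧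
        d ≤ q * (μ + σ * p) / (p * q - 1) - 1 / d₀ := by
  obtain ⟨hγ0, hγ1⟩ := hγ
  obtain ⟨hθ0, hθ1⟩ := hθ
  obtain ⟨hμ0, hμ2⟩ := hμ
  obtain ⟨hσ0, hσ2⟩ := hσ
  have hA : (0:ℝ) < p * q - 1 := by nlinarith
  have hθA : (0:ℝ) < θ * (p * q - 1) := by positivity
  have hγA : (0:ℝ) < γ * (p * q - 1) := by positivity
  have key := stmt10_key γ θ μ σ p q d hγ0 hθ0 hμ0 hσ0 hp hq hd hpos
  rw [le_min_iff, le_max_iff, le_max_iff, le_div_iff₀ hθA, le_div_iff₀ hγA,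
    le_div_iff₀ hγA, le_div_iff₀ hθA, key]
  refine exists_congr fun d₀ => ?_
  constructor
  · rintro ⟨hd₀, P1, P2, P3, P4⟩
    have hdA : (0:ℝ) < d₀ * (p * q - 1) := mul_pos hd₀ hA
    refine ⟨hd₀, (le_div_iff₀ hdA).2 P1, (le_div_iff₀ hdA).2 P2, (le_div_iff₀ hdA).2 P3, ?_⟩
    rw [show q * (μ + σ * p) / (p * q - 1) - 1 / d₀
        = (q * (μ + σ * p) * d₀ - (p * q - 1) * 1) / ((p * q - 1) * d₀) from
        div_sub_div _ _ hA.ne' hd₀.ne', le_div_iff₀ (mul_pos hA hd₀)]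
    exact P4
  · rintro ⟨hd₀, P1, P2, P3, P4⟩
    have hdA : (0:ℝ) < d₀ * (p * q - 1) := mul_pos hd₀ hA
    refine ⟨hd₀, (le_div_iff₀ hdA).1 P1, (le_div_iff₀ hdA).1 P2, (le_div_iff₀ hdA).1 P3, ?_⟩
    rw [show q * (μ + σ * p) / (p * q - 1) - 1 / d₀
        = (q * (μ + σ * p) * d₀ - (p * q - 1) * 1) / ((p * q - 1) * d₀) from
        div_sub_div _ _ hA.ne' hd₀.ne', le_div_iff₀ (mul_pos hA hd₀)] at P4
    exact P4
end

section
/- Let γ, θ ∈ (0,1], μ, σ ∈ (0,2], p, q ∈ (1,∞) with θp + γpq − pq + 1 > 0. Assume θ/σ ≤ γ/μ and p(q − θ) ≤ 1. Then min_{1≤i≤4} h_i(θ/σ) = D₁ and for every d₀ > 0, min_{1≤i≤4} h_i(d₀) ≤ D₁; that is, the supremum over d₀ > 0 of min_i h_i(d₀) is attained at d₀ = θ/σ and equals D₁ = (θσp+θμpq−σpq+σ)/(θ(pq−1)). -/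
/-- `h₁(d₀) = (p(θ+γq)−pq+1)/(d₀(pq−1))`. -/
noncomputable def h1 (γ θ p q d₀ : ℝ) : ℝ := (p * (θ + γ * q) - p * q + 1) / (d₀ * (p * q - 1))

/-- `h₂(d₀) = (p(θ+d₀μq)−pq+1)/(d₀(pq−1))`. -/
noncomputable def h2 (θ μ p q d₀ : ℝ) : ℝ := (p * (θ + d₀ * μ * q) - p * q + 1) / (d₀ * (p * q - 1))

/-- `h₃(d₀) = (p(σd₀+γq)−pq+1)/(d₀(pq−1))`. -/
noncomputable def h3 (γ σ p q d₀ : ℝ) : ℝ := (p * (σ * d₀ + γ * q) - p * q + 1) / (d₀ * (p * q - 1))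

/-- `h₄(d₀) = p(σ+μq)/(pq−1) − 1/d₀`. -/
noncomputable def h4 (μ σ p q d₀ : ℝ) : ℝ := p * (σ + μ * q) / (p * q - 1) - 1 / d₀

/-- Case I of the proof of Lemma 6 (subcase `p ≤ 1/(q−θ)`): if `θ/σ ≤ γ/μ` and
`p(q−θ) ≤ 1`, then the supremum over `d₀ > 0` of `min_i h_i(d₀)` is attained at
`d₀ = θ/σ` and equals `D₁ = (θσp+θμpq−σpq+σ)/(θ(pq−1))`. -/
theorem stmt11 (γ θ μ σ p q : ℝ)
    (hγ : γ ∈ Set.Ioc (0 : ℝ) 1) (hθ : θ ∈ Set.Ioc (0 : ℝ) 1)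
    (hμ : μ ∈ Set.Ioc (0 : ℝ) 2) (hσ : σ ∈ Set.Ioc (0 : ℝ) 2)
    (hp : 1 < p) (hq : 1 < q)
    (hpos : θ * p + γ * p * q - p * q + 1 > 0)
    (hcase : θ / σ ≤ γ / μ) (hsub : p * (q - θ) ≤ 1) :
    min (min (h1 γ θ p q (θ / σ)) (h2 θ μ p q (θ / σ)))
        (min (h3 γ σ p q (θ / σ)) (h4 μ σ p q (θ / σ))) =
      (θ * σ * p + θ * μ * p * q - σ * p * q + σ) / (θ * (p * q - 1)) ∧
    ∀ d₀ > (0 : ℝ),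
      min (min (h1 γ θ p q d₀) (h2 θ μ p q d₀)) (min (h3 γ σ p q d₀) (h4 μ σ p q d₀)) ≤
        (θ * σ * p + θ * μ * p * q - σ * p * q + σ) / (θ * (p * q - 1)) := by
  obtain ⟨hγ0, hγ1⟩ := hγ
  obtain ⟨hθ0, hθ1⟩ := hθ
  obtain ⟨hμ0, hμ2⟩ := hμ
  obtain ⟨hσ0, hσ2⟩ := hσ
  have hA : 0 < p * q - 1 := by nlinarith
  have hd : 0 < θ / σ := div_pos hθ0 hσ0
  have hθμσγ : θ * μ ≤ σ * γ := by
    rw [div_le_div_iff₀ hσ0 hμ0] at hcase; linarith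
  have h0 : 0 ≤ p * θ - p * q + 1 := by nlinarith
  have h2eq : h2 θ μ p q (θ / σ) =
      (θ * σ * p + θ * μ * p * q - σ * p * q + σ) / (θ * (p * q - 1)) := by
    unfold h2; rw [div_eq_div_iff (by positivity) (by positivity)]
    field_simp; try ring
  have h4eq : h4 μ σ p q (θ / σ) =
      (θ * σ * p + θ * μ * p * q - σ * p * q + σ) / (θ * (p * q - 1)) := by
    unfold h4
    rw [div_sub_div _ _ (ne_of_gt hA) (ne_of_gt hd), div_eq_div_iff (by positivity) (by positivity)]
    field_simp; try ring
  have h13 : h3 γ σ p q (θ / σ) = h1 γ θ p q (θ / σ) := by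
    unfold h1 h3
    rw [div_eq_div_iff (by positivity) (by positivity)]
    field_simp; try ring
  have h1eq : h1 γ θ p q (θ / σ) =
      ((p * (θ + γ * q) - p * q + 1) * σ) / (θ * (p * q - 1)) := by
    unfold h1; rw [div_eq_div_iff (by positivity) (by positivity)]
    field_simp; try ring
  have hDle1 : (θ * σ * p + θ * μ * p * q - σ * p * q + σ) / (θ * (p * q - 1)) ≤
      h1 γ θ p q (θ / σ) := by
    rw [h1eq, div_le_div_iff₀ (by positivity) (by positivity)]
    nlinarith [mul_nonneg (mul_nonneg (mul_pos (mul_pos (by linarith : (0:ℝ) < p) (by linarith : (0:ℝ) < q)) hθ0).le hA.le) (sub_nonneg.mpr hθμσγ),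
      mul_pos (mul_pos hθ0 hA) (mul_pos hθ0 hA)]
  constructor
  · rw [h2eq, h4eq, h13, min_self, min_eq_right hDle1]
  · intro d₀ hd₀
    rcases le_or_gt d₀ (θ / σ) with hle | hlt
    · refine le_trans (min_le_of_right_le (min_le_right _ _)) ?_
      rw [← h4eq]
      unfold h4
      have h1d : σ / θ ≤ 1 / d₀ := by
        rw [div_le_div_iff₀ hθ0 hd₀]
        nlinarith [(le_div_iff₀ hσ0).mp hle]
      have h1d' : 1 / (θ / σ) = σ / θ := one_div_div θ σ
      linarith
    · refine le_trans (min_le_of_left_le (min_le_right _ _)) ?_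
      unfold h2
      rw [div_le_div_iff₀ (by positivity) (by positivity)]
      have hσd : θ ≤ d₀ * σ := le_of_lt ((div_lt_iff₀ hσ0).mp hlt)
      nlinarith [mul_nonneg (mul_nonneg h0 (by linarith : (0:ℝ) ≤ d₀ * σ - θ)) hA.le]
end

section
/- Let γ, θ ∈ (0,1], μ, σ ∈ (0,2], p, q ∈ (1,∞) with θp + γpq − pq + 1 > 0. Assume θ/σ ≤ γ/μ and p(q − θ) ≥ 1. Then min_{1≤i≤4} h_i(γ/μ) = D₂ and for every d₀ > 0, min_{1≤i≤4} h_i(d₀) ≤ D₂; that is, the supremum over d₀ > 0 of min_i h_i(d₀) is attained at d₀ = γ/μ and equals D₂ = μ(θp+γpq−pq+1)/(γ(pq−1)). -/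
/-- Case I of the proof of Lemma 6 (subcase `p ≥ 1/(q−θ)`): if `θ/σ ≤ γ/μ` and
`p(q−θ) ≥ 1`, then the supremum over `d₀ > 0` of `min_i h_i(d₀)` is attained at
`d₀ = γ/μ` and equals `D₂ = μ(θp+γpq−pq+1)/(γ(pq−1))`. -/
theorem stmt12 (γ θ μ σ p q : ℝ)
    (hγ : γ ∈ Set.Ioc (0 : ℝ) 1) (hθ : θ ∈ Set.Ioc (0 : ℝ) 1)
    (hμ : μ ∈ Set.Ioc (0 : ℝ) 2) (hσ : σ ∈ Set.Ioc (0 : ℝ) 2)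
    (hp : 1 < p) (hq : 1 < q)
    (hpos : θ * p + γ * p * q - p * q + 1 > 0)
    (hcase : θ / σ ≤ γ / μ) (hsub : 1 ≤ p * (q - θ)) :
    min (min (h1 γ θ p q (γ / μ)) (h2 θ μ p q (γ / μ)))
        (min (h3 γ σ p q (γ / μ)) (h4 μ σ p q (γ / μ))) =
      μ * (θ * p + γ * p * q - p * q + 1) / (γ * (p * q - 1)) ∧
    ∀ d₀ > (0 : ℝ),
      min (min (h1 γ θ p q d₀) (h2 θ μ p q d₀)) (min (h3 γ σ p q d₀) (h4 μ σ p q d₀)) ≤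
        μ * (θ * p + γ * p * q - p * q + 1) / (γ * (p * q - 1)) := by

  obtain ⟨hγ0, hγ1⟩ := hγ
  obtain ⟨hθ0, hθ1⟩ := hθ
  obtain ⟨hμ0, hμ1⟩ := hμ
  obtain ⟨hσ0, hσ1⟩ := hσ
  have hA : 0 < p * q - 1 := by nlinarith
  have hd : 0 < γ / μ := div_pos hγ0 hμ0
  have hγne := hγ0.ne'
  have hμne := hμ0.ne'
  have hAne := hA.ne'
  have hμθ : μ * θ ≤ γ * σ := by
    rw [div_le_div_iff₀ hσ0 hμ0] at hcase; nlinarith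
  have hC : 0 < p * (θ + γ * q) - p * q + 1 := by nlinarith
  have hsub' : 0 ≤ p * q - p * θ - 1 := by nlinarith
  have e1 : h1 γ θ p q (γ / μ) = μ * (θ * p + γ * p * q - p * q + 1) / (γ * (p * q - 1)) := by
    unfold h1; field_simp
  have e2 : h2 θ μ p q (γ / μ) = μ * (θ * p + γ * p * q - p * q + 1) / (γ * (p * q - 1)) := by
    unfold h2; field_simp
  have e34 : h3 γ σ p q (γ / μ) = h4 μ σ p q (γ / μ) := by
    unfold h3 h4; field_simp; ring
  have e3 : h3 γ σ p q (γ / μ) = (p * σ * γ + γ * p * q * μ - p * q * μ + μ) / (γ * (p * q - 1)) := by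
    unfold h3; field_simp
  have hge3 : μ * (θ * p + γ * p * q - p * q + 1) / (γ * (p * q - 1)) ≤ h3 γ σ p q (γ / μ) := by
    rw [e3, div_le_div_iff₀ (by positivity) (by positivity)]
    nlinarith [mul_nonneg (mul_nonneg hA.le hγ0.le) (mul_nonneg (le_of_lt (lt_trans one_pos hp)) (sub_nonneg.2 hμθ))]
  have hge4 : μ * (θ * p + γ * p * q - p * q + 1) / (γ * (p * q - 1)) ≤ h4 μ σ p q (γ / μ) :=
    e34 ▸ hge3
  constructor
  · rw [e1, e2, min_self, min_eq_left (le_min hge3 hge4)]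
  · intro d₀ hd₀
    have hdAne : d₀ * (p * q - 1) > 0 := by positivity
    rcases le_total d₀ (γ / μ) with h | h
    · refine le_trans (min_le_left _ _) (le_trans (min_le_right _ _) ?_)
      unfold h2
      rw [div_le_div_iff₀ hdAne (by positivity)]
      have hle : d₀ * μ ≤ γ := by
        rw [le_div_iff₀ hμ0] at h; linarith
      nlinarith [mul_nonneg (mul_nonneg hA.le (sub_nonneg.2 hle)) hsub']
    · refine le_trans (min_le_left _ _) (le_trans (min_le_left _ _) ?_)
      unfold h1
      rw [div_le_div_iff₀ hdAne (by positivity)]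
      have hle : γ ≤ d₀ * μ := by
        rw [div_le_iff₀ hμ0] at h; linarith
      nlinarith [mul_nonneg (mul_nonneg hA.le hC.le) (sub_nonneg.2 hle)]
end

section
/- Let γ, θ ∈ (0,1], μ, σ ∈ (0,2], p, q ∈ (1,∞) with θp + γpq − pq + 1 > 0. Assume θ/σ ≥ γ/μ and (1 − γ)pq ≤ 1. Then min_{1≤i≤4} h_i(γ/μ) = D₃ and for every d₀ > 0, min_{1≤i≤4} h_i(d₀) ≤ D₃; that is, the supremum over d₀ > 0 of min_i h_i(d₀) is attained at d₀ = γ/μ and equals D₃ = (γσp+γμpq−μpq+μ)/(γ(pq−1)). -/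
/-- Case II of the proof of Lemma 6 (subcase `(1−γ)pq ≤ 1`): if `θ/σ ≥ γ/μ` and
`(1−γ)pq ≤ 1`, then the supremum over `d₀ > 0` of `min_i h_i(d₀)` is attained at
`d₀ = γ/μ` and equals `D₃ = (γσp+γμpq−μpq+μ)/(γ(pq−1))`. -/
theorem stmt13 (γ θ μ σ p q : ℝ)
    (hγ : γ ∈ Set.Ioc (0 : ℝ) 1) (hθ : θ ∈ Set.Ioc (0 : ℝ) 1)
    (hμ : μ ∈ Set.Ioc (0 : ℝ) 2) (hσ : σ ∈ Set.Ioc (0 : ℝ) 2)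
    (hp : 1 < p) (hq : 1 < q)
    (hpos : θ * p + γ * p * q - p * q + 1 > 0)
    (hcase : γ / μ ≤ θ / σ) (hsub : (1 - γ) * (p * q) ≤ 1) :
    min (min (h1 γ θ p q (γ / μ)) (h2 θ μ p q (γ / μ)))
        (min (h3 γ σ p q (γ / μ)) (h4 μ σ p q (γ / μ))) =
      (γ * σ * p + γ * μ * p * q - μ * p * q + μ) / (γ * (p * q - 1)) ∧
    ∀ d₀ > (0 : ℝ),
      min (min (h1 γ θ p q d₀) (h2 θ μ p q d₀)) (min (h3 γ σ p q d₀) (h4 μ σ p q d₀)) ≤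
        (γ * σ * p + γ * μ * p * q - μ * p * q + μ) / (γ * (p * q - 1)) := by
  obtain ⟨hγ0, hγ1⟩ := hγ
  obtain ⟨hθ0, hθ1⟩ := hθ
  obtain ⟨hμ0, hμ2⟩ := hμ
  obtain ⟨hσ0, hσ2⟩ := hσ
  have hpq : 0 < p * q - 1 := by nlinarith
  have hd : 0 < γ / μ := div_pos hγ0 hμ0
  have hθμ : γ * σ ≤ θ * μ := by
    rw [div_le_div_iff₀ hμ0 hσ0] at hcase; linarith
  have hμne : μ ≠ 0 := ne_of_gt hμ0
  have hγne : γ ≠ 0 := ne_of_gt hγ0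
  have hpqne : p * q - 1 ≠ 0 := ne_of_gt hpq
  set D₃ := (γ * σ * p + γ * μ * p * q - μ * p * q + μ) / (γ * (p * q - 1)) with hD₃
  have h3eq : h3 γ σ p q (γ / μ) = D₃ := by
    unfold h3; rw [hD₃]; field_simp
  have h4eq : h4 μ σ p q (γ / μ) = D₃ := by
    unfold h4; rw [hD₃]; field_simp; ring
  have h21eq : h2 θ μ p q (γ / μ) = h1 γ θ p q (γ / μ) := by
    unfold h1 h2; field_simp
  have h1alt : h1 γ θ p q (γ / μ) =
      (μ * (p * (θ + γ * q) - p * q + 1)) / (γ * (p * q - 1)) := by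
    unfold h1; field_simp
  have h1ge : D₃ ≤ h1 γ θ p q (γ / μ) := by
    rw [h1alt, hD₃, div_le_div_iff₀ (by positivity) (by positivity)]
    nlinarith [mul_nonneg (sub_nonneg.mpr hθμ) (by positivity : (0:ℝ) ≤ p), hpq.le,
      mul_nonneg (mul_nonneg (sub_nonneg.mpr hθμ) (by positivity : (0:ℝ) ≤ p)) hpq.le,
      mul_pos hγ0 hpq]
  have hA : (0:ℝ) ≤ γ * p * q - p * q + 1 := by nlinarith
  constructor
  · rw [h21eq, min_self, h3eq, h4eq, min_self, min_eq_right h1ge]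
  · intro d₀ hd₀
    rcases le_total d₀ (γ / μ) with hle | hle
    · refine le_trans (le_trans (min_le_right _ _) (min_le_right _ _)) ?_
      have hinv : μ / γ ≤ 1 / d₀ := by
        have := one_div_le_one_div_of_le hd₀ hle
        rwa [one_div_div] at this
      rw [← h4eq]; unfold h4; rw [one_div_div]; linarith
    · refine le_trans (le_trans (min_le_right _ _) (min_le_left _ _)) ?_
      have hγμ : γ ≤ μ * d₀ := by
        rw [div_le_iff₀ hμ0] at hle; linarith
      unfold h3
      rw [hD₃, div_le_div_iff₀ (by positivity) (by positivity)]
      nlinarith [mul_nonneg (mul_nonneg hA (sub_nonneg.mpr hγμ)) hpq.le]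
end

section
/- Let γ, θ ∈ (0,1], μ, σ ∈ (0,2], p, q ∈ (1,∞) with θp + γpq − pq + 1 > 0. Assume θ/σ ≥ γ/μ and (1 − γ)pq ≥ 1. Then min_{1≤i≤4} h_i(θ/σ) = D₄ and for every d₀ > 0, min_{1≤i≤4} h_i(d₀) ≤ D₄; that is, the supremum over d₀ > 0 of min_i h_i(d₀) is attained at d₀ = θ/σ and equals D₄ = σ(θp+γpq−pq+1)/(θ(pq−1)). -/
set_option maxHeartbeats 800000


/-- Case II of the proof of Lemma 6 (subcase `(1−γ)pq ≥ 1`): if `θ/σ ≥ γ/μ` and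
`(1−γ)pq ≥ 1`, then the supremum over `d₀ > 0` of `min_i h_i(d₀)` is attained at
`d₀ = θ/σ` and equals `D₄ = σ(θp+γpq−pq+1)/(θ(pq−1))`. -/
theorem stmt14 (γ θ μ σ p q : ℝ)
    (hγ : γ ∈ Set.Ioc (0 : ℝ) 1) (hθ : θ ∈ Set.Ioc (0 : ℝ) 1)
    (hμ : μ ∈ Set.Ioc (0 : ℝ) 2) (hσ : σ ∈ Set.Ioc (0 : ℝ) 2)
    (hp : 1 < p) (hq : 1 < q)
    (hpos : θ * p + γ * p * q - p * q + 1 > 0)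
    (hcase : γ / μ ≤ θ / σ) (hsub : 1 ≤ (1 - γ) * (p * q)) :
    min (min (h1 γ θ p q (θ / σ)) (h2 θ μ p q (θ / σ)))
        (min (h3 γ σ p q (θ / σ)) (h4 μ σ p q (θ / σ))) =
      σ * (θ * p + γ * p * q - p * q + 1) / (θ * (p * q - 1)) ∧
    ∀ d₀ > (0 : ℝ),
      min (min (h1 γ θ p q d₀) (h2 θ μ p q d₀)) (min (h3 γ σ p q d₀) (h4 μ σ p q d₀)) ≤
        σ * (θ * p + γ * p * q - p * q + 1) / (θ * (p * q - 1)) := by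
  obtain ⟨hγ0, hγ1⟩ := hγ
  obtain ⟨hθ0, hθ1⟩ := hθ
  obtain ⟨hμ0, hμ1⟩ := hμ
  obtain ⟨hσ0, hσ1⟩ := hσ
  have hA : (0:ℝ) < p * q - 1 := by nlinarith
  have hts : (0:ℝ) < θ / σ := div_pos hθ0 hσ0
  have hden : (0:ℝ) < θ / σ * (p * q - 1) := mul_pos hts hA
  have hθA : (0:ℝ) < θ * (p * q - 1) := mul_pos hθ0 hA
  have hσθ : σ * γ ≤ θ * μ := by
    rw [div_le_div_iff₀ hμ0 hσ0] at hcase; nlinarith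
  set D : ℝ := σ * (θ * p + γ * p * q - p * q + 1) / (θ * (p * q - 1)) with hD
  have hANe : p * q - 1 ≠ 0 := ne_of_gt hA
  have hθNe : θ ≠ 0 := ne_of_gt hθ0
  have hσNe : σ ≠ 0 := ne_of_gt hσ0
  have e1 : h1 γ θ p q (θ / σ) = D := by
    unfold h1; rw [hD, div_eq_div_iff (ne_of_gt hden) (ne_of_gt hθA)]
    field_simp
  have e3 : h3 γ σ p q (θ / σ) = D := by
    unfold h3; rw [hD, div_eq_div_iff (ne_of_gt hden) (ne_of_gt hθA)]
    field_simp
  have e2 : D ≤ h2 θ μ p q (θ / σ) := by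
    rw [← e1]; unfold h1 h2
    set t := θ / σ with htdef
    have hγμ : γ ≤ t * μ := (div_le_iff₀ hμ0).mp hcase
    rw [div_le_div_iff₀ hden hden]
    nlinarith [mul_nonneg (mul_nonneg (mul_nonneg (sub_nonneg.2 hγμ) hts.le) hA.le)
      (by positivity : (0:ℝ) ≤ p * q)]
  have e4 : D ≤ h4 μ σ p q (θ / σ) := by
    have key : h4 μ σ p q (θ / σ) - D = p * q * (θ * μ - σ * γ) / (θ * (p * q - 1)) := by
      unfold h4; rw [hD]; field_simp; ring
    have hnn : (0:ℝ) ≤ p * q * (θ * μ - σ * γ) / (θ * (p * q - 1)) := by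
      apply div_nonneg _ (le_of_lt hθA); nlinarith
    linarith
  constructor
  · rw [e1, e3, min_eq_left e2, min_eq_left e4, min_self]
  · intro d₀ hd₀
    have hdA : (0:ℝ) < d₀ * (p * q - 1) := mul_pos hd₀ hA
    rcases le_or_gt d₀ (θ / σ) with hle | hlt
    · -- use h3 : h3 d₀ ≤ D since h3 nondecreasing
      have hσd : σ * d₀ ≤ θ := by
        rw [le_div_iff₀ hσ0] at hle; nlinarith
      have hc : p * γ * q - p * q + 1 ≤ 0 := by nlinarith
      have h3le : h3 γ σ p q d₀ ≤ D := by
        unfold h3; rw [hD, div_le_div_iff₀ hdA hθA]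
        nlinarith [mul_nonneg (mul_nonneg (neg_nonneg.2 hc) (sub_nonneg.2 hσd)) hA.le]
      exact le_trans (min_le_right _ _) (le_trans (min_le_left _ _) h3le)
    · have hθσd : θ ≤ σ * d₀ := by
        rw [div_lt_iff₀ hσ0] at hlt; nlinarith
      have h1le : h1 γ θ p q d₀ ≤ D := by
        unfold h1; rw [hD, div_le_div_iff₀ hdA hθA]
        nlinarith [mul_nonneg (mul_nonneg (sub_nonneg.2 hθσd) hpos.le) hA.le]
      exact le_trans (min_le_left _ _) (le_trans (min_le_left _ _) h1le)
end

section
/- Let γ, θ ∈ (0,1], μ, σ ∈ (0,2], p, q ∈ (1,∞) with γq + θpq − pq + 1 > 0. Assume θ/σ ≤ γ/μ and (1 − θ)pq ≤ 1. Then min_{1≤i≤4} H_i(θ/σ) = E₁ and for every d₀ > 0, min_{1≤i≤4} H_i(d₀) ≤ E₁; that is, the supremum over d₀ > 0 of min_i H_i(d₀) is attained at d₀ = θ/σ and equals E₁ = (θμq+θσpq−σpq+σ)/(θ(pq−1)). -/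
/-- `H₁(d₀) = (q(γ+θp)−pq+1)/(d₀(pq−1))`. -/
noncomputable def H1 (γ θ p q d₀ : ℝ) : ℝ := (q * (γ + θ * p) - p * q + 1) / (d₀ * (p * q - 1))

/-- `H₂(d₀) = (q(γ+d₀σp)−pq+1)/(d₀(pq−1))`. -/
noncomputable def H2 (γ σ p q d₀ : ℝ) : ℝ := (q * (γ + d₀ * σ * p) - p * q + 1) / (d₀ * (p * q - 1))

/-- `H₃(d₀) = (q(μd₀+θp)−pq+1)/(d₀(pq−1))`. -/
noncomputable def H3 (θ μ p q d₀ : ℝ) : ℝ := (q * (μ * d₀ + θ * p) - p * q + 1) / (d₀ * (p * q - 1))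

/-- `H₄(d₀) = q(μ+σp)/(pq−1) − 1/d₀`. -/
noncomputable def H4 (μ σ p q d₀ : ℝ) : ℝ := q * (μ + σ * p) / (p * q - 1) - 1 / d₀

/-!
At `d₀ = θ/σ` the functions `H₃` and `H₄` both equal `E₁`, while `H₁ = H₂ ≥ E₁` there because
`θμ ≤ γσ`. Since `H₄ = const − 1/d₀` is increasing and, when `(1−θ)pq ≤ 1`,
`H₃ = const + (θpq − pq + 1)/(d₀(pq−1))` is non-increasing, `H₄` caps the minimum left of `θ/σ`
and `H₃` caps it right of `θ/σ`.
-/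

noncomputable def E1 (θ μ σ p q : ℝ) : ℝ :=
  (θ * μ * q + θ * σ * p * q - σ * p * q + σ) / (θ * (p * q - 1))

section

variable {γ θ μ σ p q : ℝ}

theorem H4_monotoneOn : MonotoneOn (H4 μ σ p q) (Set.Ioi 0) := by
  intro a ha b _ hab
  have := one_div_le_one_div_of_le ha hab
  unfold H4
  linarith

theorem H3_eq_add_div {d : ℝ} (hd : d ≠ 0) :
    H3 θ μ p q d = q * μ / (p * q - 1) + (q * θ * p - p * q + 1) / (d * (p * q - 1)) := by
  unfold H3
  field_simp
  ring

theorem H3_antitoneOn (hpq : 1 < p * q) (hsub : (1 - θ) * (p * q) ≤ 1) :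
    AntitoneOn (H3 θ μ p q) (Set.Ioi 0) := by
  intro a (ha : 0 < a) b (hb : 0 < b) hab
  have hD : 0 < p * q - 1 := by linarith
  rw [H3_eq_add_div hb.ne', H3_eq_add_div ha.ne']
  gcongr
  linarith

theorem H3_div_eq_E1 (hθ : θ ≠ 0) (hσ : σ ≠ 0) :
    H3 θ μ p q (θ / σ) = E1 θ μ σ p q := by
  unfold H3 E1
  field_simp

theorem H4_div_eq_E1 (hθ : θ ≠ 0) (hpq : p * q - 1 ≠ 0) :
    H4 μ σ p q (θ / σ) = E1 θ μ σ p q := by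
  unfold H4 E1
  rw [one_div_div, div_sub_div _ _ hpq hθ, mul_comm (p * q - 1) θ]
  ring

theorem H2_div_eq_H1 (hσ : σ ≠ 0) : H2 γ σ p q (θ / σ) = H1 γ θ p q (θ / σ) := by
  unfold H1 H2
  rw [div_mul_cancel₀ θ hσ]

theorem E1_le_H1_div (hθ : 0 < θ) (hσ : 0 < σ) (hq : 0 ≤ q) (hpq : 1 < p * q)
    (hθμ : θ * μ ≤ γ * σ) : E1 θ μ σ p q ≤ H1 γ θ p q (θ / σ) := by
  have hD : 0 < p * q - 1 := by linarith
  have hH1 : H1 γ θ p q (θ / σ) = σ * (q * (γ + θ * p) - p * q + 1) / (θ * (p * q - 1)) := by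
    unfold H1
    field_simp
  rw [hH1, E1]
  gcongr
  nlinarith [mul_le_mul_of_nonneg_left hθμ hq]

end

theorem stmt15_general (γ θ μ σ p q : ℝ)
    (hθ : θ ∈ Set.Ioc (0 : ℝ) 1)
    (hμ : μ ∈ Set.Ioc (0 : ℝ) 2) (hσ : σ ∈ Set.Ioc (0 : ℝ) 2)
    (hp : 1 < p) (hq : 1 < q)
    (hcase : θ / σ ≤ γ / μ) (hsub : (1 - θ) * (p * q) ≤ 1) :
    min (min (H1 γ θ p q (θ / σ)) (H2 γ σ p q (θ / σ)))
        (min (H3 θ μ p q (θ / σ)) (H4 μ σ p q (θ / σ))) =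
      (θ * μ * q + θ * σ * p * q - σ * p * q + σ) / (θ * (p * q - 1)) ∧
    ∀ d₀ > (0 : ℝ),
      min (min (H1 γ θ p q d₀) (H2 γ σ p q d₀)) (min (H3 θ μ p q d₀) (H4 μ σ p q d₀)) ≤
        (θ * μ * q + θ * σ * p * q - σ * p * q + σ) / (θ * (p * q - 1)) := by
  have hθ0 := hθ.1
  have hσ0 := hσ.1
  have hpq : 1 < p * q := by nlinarith
  have hD : p * q - 1 ≠ 0 := by linarith
  have hpeak : (0 : ℝ) < θ / σ := div_pos hθ0 hσ0
  have hθμ : θ * μ ≤ γ * σ := (div_le_div_iff₀ hσ0 hμ.1).1 hcase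
  have h3 : H3 θ μ p q (θ / σ) = E1 θ μ σ p q := H3_div_eq_E1 hθ0.ne' hσ0.ne'
  have h4 : H4 μ σ p q (θ / σ) = E1 θ μ σ p q := H4_div_eq_E1 hθ0.ne' hD
  refine ⟨?_, fun d₀ hd₀ => ?_⟩
  · rw [H2_div_eq_H1 hσ0.ne', h3, h4, min_self, min_self,
      min_eq_right (E1_le_H1_div hθ0 hσ0 (by linarith) hpq hθμ), E1]
  · change _ ≤ E1 θ μ σ p q
    rcases le_total d₀ (θ / σ) with hle | hle
    · exact min_le_of_right_le <| min_le_of_right_le <| h4 ▸ H4_monotoneOn hd₀ hpeak hle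
    · exact min_le_of_right_le <| min_le_of_left_le <|
        h3 ▸ H3_antitoneOn hpq hsub hpeak hd₀ hle

/-- Case I of the proof of Lemma 7 (subcase `(1−θ)pq ≤ 1`): if `θ/σ ≤ γ/μ` and
`(1−θ)pq ≤ 1`, then the supremum over `d₀ > 0` of `min_i H_i(d₀)` is attained at
`d₀ = θ/σ` and equals `E₁ = (θμq+θσpq−σpq+σ)/(θ(pq−1))`. -/
theorem stmt15 (γ θ μ σ p q : ℝ)
    (hγ : γ ∈ Set.Ioc (0 : ℝ) 1) (hθ : θ ∈ Set.Ioc (0 : ℝ) 1)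
    (hμ : μ ∈ Set.Ioc (0 : ℝ) 2) (hσ : σ ∈ Set.Ioc (0 : ℝ) 2)
    (hp : 1 < p) (hq : 1 < q)
    (hpos : γ * q + θ * p * q - p * q + 1 > 0)
    (hcase : θ / σ ≤ γ / μ) (hsub : (1 - θ) * (p * q) ≤ 1) :
    min (min (H1 γ θ p q (θ / σ)) (H2 γ σ p q (θ / σ)))
        (min (H3 θ μ p q (θ / σ)) (H4 μ σ p q (θ / σ))) =
      (θ * μ * q + θ * σ * p * q - σ * p * q + σ) / (θ * (p * q - 1)) ∧
    ∀ d₀ > (0 : ℝ),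
      min (min (H1 γ θ p q d₀) (H2 γ σ p q d₀)) (min (H3 θ μ p q d₀) (H4 μ σ p q d₀)) ≤
        (θ * μ * q + θ * σ * p * q - σ * p * q + σ) / (θ * (p * q - 1)) :=
  stmt15_general γ θ μ σ p q hθ hμ hσ hp hq hcase hsub
end

section
/- Let γ, θ ∈ (0,1], μ, σ ∈ (0,2], p, q ∈ (1,∞) with γq + θpq − pq + 1 > 0. Assume θ/σ ≥ γ/μ and q(p − γ) ≥ 1. Then min_{1≤i≤4} H_i(θ/σ) = E₄ and for every d₀ > 0, min_{1≤i≤4} H_i(d₀) ≤ E₄; that is, the supremum over d₀ > 0 of min_i H_i(d₀) is attained at d₀ = θ/σ and equals E₄ = σ(γq+θpq−pq+1)/(θ(pq−1)). -/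
noncomputable def E4 (γ θ σ p q : ℝ) : ℝ := σ * (γ * q + θ * p * q - p * q + 1) / (θ * (p * q - 1))

theorem H1_div_eq_E4 (γ θ σ p q : ℝ) : H1 γ θ p q (θ / σ) = E4 γ θ σ p q := by
  rw [H1, E4, div_mul_eq_mul_div, div_div_eq_mul_div]
  ring

theorem H2_div_eq_E4 {σ : ℝ} (γ θ p q : ℝ) (hσ : σ ≠ 0) : H2 γ σ p q (θ / σ) = E4 γ θ σ p q := by
  rw [← H1_div_eq_E4, H1, H2, div_mul_cancel₀ θ hσ]

section

variable {γ θ μ σ p q : ℝ}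

theorem H3_div_eq (hθ : θ ≠ 0) (hσ : σ ≠ 0) :
    H3 θ μ p q (θ / σ) = E4 γ θ σ p q + q * (θ * μ - σ * γ) / (θ * (p * q - 1)) := by
  rw [H3, E4]
  field_simp
  ring

theorem H4_div_eq (hθ : θ ≠ 0) (hA : p * q - 1 ≠ 0) :
    H4 μ σ p q (θ / σ) = E4 γ θ σ p q + q * (θ * μ - σ * γ) / (θ * (p * q - 1)) := by
  rw [H4, E4, one_div_div, div_sub_div _ _ hA hθ, ← add_div,
    div_eq_div_iff (mul_ne_zero hA hθ) (mul_ne_zero hθ hA)]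
  ring

theorem H1_antitoneOn (hN : 0 ≤ q * (γ + θ * p) - p * q + 1) (hA : 0 < p * q - 1) :
    AntitoneOn (H1 γ θ p q) (Set.Ioi 0) := by
  intro d hd e _ hde
  unfold H1
  gcongr
  exact mul_pos hd hA

theorem H2_eq {d : ℝ} (hd : d ≠ 0) (hA : p * q - 1 ≠ 0) :
    H2 γ σ p q d = q * σ * p / (p * q - 1) - (p * q - 1 - q * γ) / (d * (p * q - 1)) := by
  rw [H2, div_sub_div _ _ hA (mul_ne_zero hd hA),
    div_eq_div_iff (mul_ne_zero hd hA) (mul_ne_zero hA (mul_ne_zero hd hA))]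
  ring

theorem H2_monotoneOn (hqγ : q * γ ≤ p * q - 1) (hA : 0 < p * q - 1) :
    MonotoneOn (H2 γ σ p q) (Set.Ioi 0) := by
  intro d hd e he hde
  rw [H2_eq (ne_of_gt hd) hA.ne', H2_eq (ne_of_gt he) hA.ne']
  have : 0 < d * (p * q - 1) := mul_pos hd hA
  have : 0 ≤ p * q - 1 - q * γ := sub_nonneg.2 hqγ
  gcongr

end

theorem stmt16_general (γ θ μ σ p q : ℝ)
    (hθ : θ ∈ Set.Ioc (0 : ℝ) 1)
    (hμ : μ ∈ Set.Ioc (0 : ℝ) 2) (hσ : σ ∈ Set.Ioc (0 : ℝ) 2)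
    (hp : 1 < p) (hq : 1 < q)
    (hpos : γ * q + θ * p * q - p * q + 1 > 0)
    (hcase : γ / μ ≤ θ / σ) (hsub : 1 ≤ q * (p - γ)) :
    min (min (H1 γ θ p q (θ / σ)) (H2 γ σ p q (θ / σ)))
        (min (H3 θ μ p q (θ / σ)) (H4 μ σ p q (θ / σ))) =
      σ * (γ * q + θ * p * q - p * q + 1) / (θ * (p * q - 1)) ∧
    ∀ d₀ > (0 : ℝ),
      min (min (H1 γ θ p q d₀) (H2 γ σ p q d₀)) (min (H3 θ μ p q d₀) (H4 μ σ p q d₀)) ≤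
        σ * (γ * q + θ * p * q - p * q + 1) / (θ * (p * q - 1)) := by
  obtain ⟨hθ0, -⟩ := hθ
  obtain ⟨hμ0, -⟩ := hμ
  obtain ⟨hσ0, -⟩ := hσ
  have hA : 0 < p * q - 1 := by nlinarith
  have hd : θ / σ ∈ Set.Ioi 0 := div_pos hθ0 hσ0
  have hgap : 0 ≤ q * (θ * μ - σ * γ) / (θ * (p * q - 1)) := by
    rw [div_le_div_iff₀ hμ0 hσ0] at hcase
    have : 0 ≤ θ * μ - σ * γ := by linarith
    positivity
  have h1 := H1_div_eq_E4 γ θ σ p q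
  have h2 := H2_div_eq_E4 γ θ p q hσ0.ne'
  refine ⟨?_, fun d₀ hd₀ => ?_⟩
  · rw [h1, h2, H3_div_eq hθ0.ne' hσ0.ne', H4_div_eq hθ0.ne' hA.ne', min_self,
      min_self, min_eq_left (le_add_of_nonneg_right hgap)]
    rfl
  · rcases le_total d₀ (θ / σ) with hle | hle
    · calc _ ≤ H2 γ σ p q d₀ := (min_le_left _ _).trans (min_le_right _ _)
        _ ≤ H2 γ σ p q (θ / σ) := H2_monotoneOn (by linarith) hA hd₀ hd hle
        _ = _ := h2
    · calc _ ≤ H1 γ θ p q d₀ := (min_le_left _ _).trans (min_le_left _ _)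
        _ ≤ H1 γ θ p q (θ / σ) := H1_antitoneOn (by linarith) hA hd hd₀ hle
        _ = _ := h1

/-- Case II of the proof of Lemma 7 (subcase `q ≥ 1/(p−γ)`): if `θ/σ ≥ γ/μ` and
`q(p−γ) ≥ 1`, then the supremum over `d₀ > 0` of `min_i H_i(d₀)` is attained at
`d₀ = θ/σ` and equals `E₄ = σ(γq+θpq−pq+1)/(θ(pq−1))`. -/
theorem stmt16 (γ θ μ σ p q : ℝ)
    (hγ : γ ∈ Set.Ioc (0 : ℝ) 1) (hθ : θ ∈ Set.Ioc (0 : ℝ) 1)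
    (hμ : μ ∈ Set.Ioc (0 : ℝ) 2) (hσ : σ ∈ Set.Ioc (0 : ℝ) 2)
    (hp : 1 < p) (hq : 1 < q)
    (hpos : γ * q + θ * p * q - p * q + 1 > 0)
    (hcase : γ / μ ≤ θ / σ) (hsub : 1 ≤ q * (p - γ)) :
    min (min (H1 γ θ p q (θ / σ)) (H2 γ σ p q (θ / σ)))
        (min (H3 θ μ p q (θ / σ)) (H4 μ σ p q (θ / σ))) =
      σ * (γ * q + θ * p * q - p * q + 1) / (θ * (p * q - 1)) ∧
    ∀ d₀ > (0 : ℝ),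
      min (min (H1 γ θ p q d₀) (H2 γ σ p q d₀)) (min (H3 θ μ p q d₀) (H4 μ σ p q d₀)) ≤
        σ * (γ * q + θ * p * q - p * q + 1) / (θ * (p * q - 1)) :=
  stmt16_general γ θ μ σ p q hθ hμ hσ hp hq hpos hcase hsub
end
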